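/- Let n ≥ 1 and let A be a real symmetric m×m matrix (m ≥ 1), partitioned as A = (Ã v; vᵀ α), where Ã is the (m−1)×(m−1) matrix obtained by deleting the last row and column of A, v ∈ ℝ^{m−1}, and α ∈ ℝ. Let Â be the (m+1)×(m+1) real symmetric matrix whose first row is (0, 0, …, 0, 1), whose middle block of rows is (0 | Ã | v), and whose last row is (1, vᵀ, α) (i.e., Â is obtained from A by bordering with a new first row and column that are zero except for entries 1 in positions (1, m+1) and (m+1, 1)). Then the characteristic polynomials satisfy charpoly(Â) = X · charpoly(A) − charpoly(Ã). -/

import Mathlib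

/-! For a `1 × 1` corner `a`, multiplying `(a b; c D)` on the right by `(det D, 0; -adj D c, 1)`
gives a block upper-triangular matrix, so `det (a b; c D) = a det D - b (adj D) c` once `det D`
is cancelled. Here `D = X - A`, whose determinant is the monic `charpoly A`, and `b`, `c` are minus
the last unit vectors, so `b (adj D) c` is the last diagonal cofactor of `X - A`, which is
`charpoly Ã`. -/

open Polynomial Matrix

namespace Matrix

variable {m n R : Type*} [Fintype m] [Fintype n] [DecidableEq m] [DecidableEq n] [CommRing R]

theorem det_fromBlocks_mul_det_pow (A : Matrix m m R) (B : Matrix m n R) (C : Matrix n m R)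
    (D : Matrix n n R) :
    (fromBlocks A B C D).det * D.det ^ Fintype.card m
      = (D.det • A - B * D.adjugate * C).det * D.det := by
  have h : fromBlocks A B C D * fromBlocks (D.det • 1) 0 (-(D.adjugate * C)) 1
      = fromBlocks (D.det • A - B * D.adjugate * C) B 0 D := by
    simp only [fromBlocks_multiply, Matrix.mul_neg, ← Matrix.mul_assoc, mul_adjugate]
    simp [sub_eq_add_neg]
  simpa [det_fromBlocks_zero₁₂, det_fromBlocks_zero₂₁, det_smul] using congrArg det h

theorem det_fromBlocks_of_unique [Unique m] (A : Matrix m m R) (B : Matrix m n R)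
    (C : Matrix n m R) (D : Matrix n n R) (hD : IsRightRegular D.det) :
    (fromBlocks A B C D).det = D.det * A default default - (B * D.adjugate * C) default default := by
  apply hD
  simpa [det_unique] using det_fromBlocks_mul_det_pow A B C D

theorem charmatrix_submatrix (M : Matrix n n R) {f : m → n}
    (hf : Function.Injective f) :
    (charmatrix M).submatrix f f = charmatrix (M.submatrix f f) := by
  ext i j : 1
  by_cases h : i = j
  · simp [h]
  · simp [charmatrix_apply_ne _ _ _ h, charmatrix_apply_ne _ _ _ (hf.ne h)]

end Matrix

theorem charpoly_bordered (m : ℕ)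
    (A : Matrix (Fin (m + 1)) (Fin (m + 1)) ℝ)
    (Atil : Matrix (Fin m) (Fin m) ℝ)
    (hAtil : Atil = A.submatrix Fin.castSucc Fin.castSucc)
    (Ahat : Matrix (Fin 1 ⊕ Fin (m + 1)) (Fin 1 ⊕ Fin (m + 1)) ℝ)
    (hAhat : Ahat = Matrix.fromBlocks 0
      (fun _ j => if j = Fin.last m then (1 : ℝ) else 0)
      (fun i _ => if i = Fin.last m then (1 : ℝ) else 0) A) :
    Ahat.charpoly = Polynomial.X * A.charpoly - Atil.charpoly := by
  have hcofactor : (charmatrix A).adjugate (Fin.last m) (Fin.last m) = Atil.charpoly := by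
    rw [adjugate_fin_succ_eq_det_submatrix, Fin.succAbove_last,
      charmatrix_submatrix _ (Fin.castSucc_injective m), ← hAtil, ← two_mul, pow_mul]
    simp [charpoly]
  -- `of` gives the border blocks the `Matrix` type that `charmatrix_fromBlocks` has to match.
  replace hAhat : Ahat = fromBlocks 0 (of fun _ j => if j = Fin.last m then 1 else 0)
      (of fun i _ => if i = Fin.last m then 1 else 0) A := hAhat
  rw [hAhat, charpoly, charmatrix_fromBlocks,
    det_fromBlocks_of_unique _ _ _ _ (charpoly_monic A).isRegular.right]
  simp [Matrix.mul_apply, hcofactor, charpoly, mul_comm]
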